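/- arXiv:2308.16302 — 2 statements merged into one kernel-verified Lean document; each statement's English description precedes it below -/
import Mathlib

section
/- Let r and b be positive integers with r | b, and set r1 := (b, r^∞), the largest divisor of b all of whose prime factors divide r (equivalently, r1 = gcd(b, r^n) for all sufficiently large n). Let χ be a Dirichlet character modulo r and let χ1 be the Dirichlet character modulo b induced by χ (so χ1(u) = χ(u mod r) when gcd(u,b)=1 and χ1(u)=0 otherwise). Then for any integer m: if r1 | m²r, then G_{χ1}(m²) = χ(b/r1) · R(m², b/r1) · (r1/r) · G_χ(m²r/r1); otherwise G_{χ1}(m²) = 0. -/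
/-!
Write `b = r₁ b₂` and `r₁ = r t`; since `r₁ = (b, r^∞)`, the factors `r₁` and `b₂` are coprime and
every prime factor of `r₁` divides `r`. By the Chinese remainder theorem the Gauss sum of the
character induced on `r₁ b₂` splits as `χ(b₂) R(n, b₂)` times the Gauss sum of the character
induced on `r₁`. The latter character is `x ↦ χ(x mod r)`, so translating `x` by `r` multiplies
its Gauss sum by `e(n/t)`: the sum vanishes unless `t ∣ n`, and for `n = t n'` each residue mod `r`
has `t` lifts mod `r₁`, which gives `t G_χ(n')`.
-/

/-- `e(x/q)`-type additive character: for `x : ZMod q`, `eZMod q x = exp(2πi·x/q)`. -/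
noncomputable def eZMod (q : ℕ) (x : ZMod q) : ℂ :=
  Complex.exp (2 * Real.pi * Complex.I * (x.val : ℂ) / (q : ℂ))

/-- Kloosterman sum `S(m, n; q) = Σ_{d mod q, gcd(d,q)=1} e((m·d + n·d⁻¹)/q)`. -/
noncomputable def kloostermanS (q : ℕ) (m n : ZMod q) : ℂ :=
  ∑ d ∈ (Finset.range q).filter (fun d => Nat.gcd d q = 1),
    eZMod q (m * (d : ZMod q) + n * ((d : ZMod q)⁻¹))

/-- Gauss sum `G_χ(n) = Σ_{a mod q} χ(a) e(a·n/q)`. -/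
noncomputable def gaussS (q : ℕ) (χ : DirichletCharacter ℂ q) (n : ZMod q) : ℂ :=
  ∑ a ∈ Finset.range q, χ (a : ZMod q) * eZMod q ((a : ZMod q) * n)

/-- Ramanujan sum `R(n, q) = Σ_{a mod q, gcd(a,q)=1} e(a·n/q)`. -/
noncomputable def ramanujanS (q : ℕ) (n : ZMod q) : ℂ :=
  ∑ a ∈ (Finset.range q).filter (fun a => Nat.gcd a q = 1), eZMod q ((a : ZMod q) * n)

open Finset AddChar DirichletCharacter

section StandardCharacter

variable {q : ℕ} [NeZero q]

lemma sum_range_natCast_eq_sum_zmod {M : Type*} [AddCommMonoid M] (f : ZMod q → M) :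
    ∑ a ∈ range q, f a = ∑ x : ZMod q, f x :=
  sum_nbij' (↑) ZMod.val (fun _ _ => mem_univ _) (fun x _ => mem_range.2 (ZMod.val_lt x))
    (fun _ ha => ZMod.val_natCast_of_lt (mem_range.1 ha)) (fun x _ => ZMod.natCast_zmod_val x)
    fun _ _ => rfl

lemma eZMod_eq_stdAddChar (x : ZMod q) : eZMod q x = ZMod.stdAddChar x := by
  rw [eZMod, ZMod.stdAddChar_apply, ZMod.toCircle_apply]

lemma gaussS_eq_gaussSum (χ : DirichletCharacter ℂ q) (n : ZMod q) :
    gaussS q χ n = gaussSum χ (ZMod.stdAddChar.mulShift n) := by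
  simp only [gaussS, gaussSum, eZMod_eq_stdAddChar, mulShift_apply, mul_comm _ n]
  exact sum_range_natCast_eq_sum_zmod fun x => χ x * ZMod.stdAddChar (n * x)

lemma ramanujanS_eq_gaussSum_one (n : ZMod q) :
    ramanujanS q n = gaussSum (1 : DirichletCharacter ℂ q) (ZMod.stdAddChar.mulShift n) := by
  rw [ramanujanS, sum_filter, gaussSum, ← sum_range_natCast_eq_sum_zmod]
  refine sum_congr rfl fun a _ => ?_
  simp only [← Nat.coprime_iff_gcd_eq_one, ← ZMod.isUnit_iff_coprime, mulShift_apply,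
    eZMod_eq_stdAddChar, mul_comm n]
  split_ifs with ha
  · rw [MulChar.one_apply ha, one_mul]
  · rw [MulChar.map_nonunit _ ha, zero_mul]

end StandardCharacter

lemma gaussSum_mulShift_of_mul_eq_one {R R' : Type*} [CommRing R] [Fintype R] [CommRing R']
    (χ : MulChar R R') (ψ : AddChar R R') {a c : R} (h : c * a = 1) :
    gaussSum χ (ψ.mulShift c) = χ a * gaussSum χ ψ := by
  have key := gaussSum_mulShift χ (ψ.mulShift c) (Units.mkOfMulEqOne a c (by rwa [mul_comm]))
  rwa [Units.val_mkOfMulEqOne, mulShift_mulShift, h, mulShift_one, eq_comm] at key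

section

open ZMod

lemma stdAddChar_eq_mul_of_coprime {q₁ q₂ : ℕ} [NeZero q₁] [NeZero q₂] {c d : ℤ}
    (h : c * q₂ + d * q₁ = 1) (x : ZMod (q₁ * q₂)) :
    stdAddChar x = stdAddChar (c * cast x : ZMod q₁) * stdAddChar (d * cast x : ZMod q₂) := by
  obtain ⟨j, rfl⟩ := ZMod.intCast_surjective x
  have hC : (c : ℂ) * q₂ + d * q₁ = 1 := by exact_mod_cast h
  have h₁ : (q₁ : ℂ) ≠ 0 := NeZero.ne _
  have h₂ : (q₂ : ℂ) ≠ 0 := NeZero.ne _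
  rw [cast_intCast (dvd_mul_right q₁ q₂), cast_intCast (dvd_mul_left q₂ q₁), ← Int.cast_mul,
    ← Int.cast_mul, stdAddChar_coe, stdAddChar_coe, stdAddChar_coe, ← Complex.exp_add]
  congr 1
  push_cast
  field_simp
  linear_combination (-(j : ℂ)) * hC

lemma stdAddChar_natCast_mul {r t : ℕ} [NeZero r] [NeZero t] (x : ZMod (r * t)) :
    stdAddChar ((t : ZMod (r * t)) * x) = stdAddChar (cast x : ZMod r) := by
  obtain ⟨j, rfl⟩ := ZMod.intCast_surjective x
  rw [cast_intCast (dvd_mul_right r t), ← Int.cast_natCast, ← Int.cast_mul, stdAddChar_coe,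
    stdAddChar_coe]
  have hr : (r : ℂ) ≠ 0 := NeZero.ne _
  have ht : (t : ℂ) ≠ 0 := NeZero.ne _
  congr 1
  push_cast
  field_simp

lemma stdAddChar_intCast_mul_natCast_eq_one_iff {r t : ℕ} [NeZero r] [NeZero t] (n : ℤ) :
    stdAddChar ((n : ZMod (r * t)) * (r : ZMod (r * t))) = 1 ↔ (t : ℤ) ∣ n := by
  rw [← AddChar.map_zero_eq_one (stdAddChar (N := r * t)), injective_stdAddChar.eq_iff,
    ← Int.cast_natCast, ← Int.cast_mul, ZMod.intCast_zmod_eq_zero_iff_dvd, Nat.cast_mul, mul_comm (r : ℤ)]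
  exact mul_dvd_mul_iff_right (Int.natCast_ne_zero.2 (NeZero.ne r))

end

lemma changeLevel_apply_of_dvd_pow {R : Type*} [CommMonoidWithZero R] {r q k : ℕ} [NeZero q]
    (hrq : r ∣ q) (hq : q ∣ r ^ k) (χ : DirichletCharacter R r) (y : ZMod q) :
    changeLevel hrq χ y = χ (ZMod.cast y) := by
  by_cases hy : IsUnit y
  · simpa using changeLevel_eq_cast_of_dvd χ hrq hy.unit
  · have hcast : ¬IsUnit (ZMod.cast y : ZMod r) := by
      rw [ZMod.cast_eq_val, ZMod.isUnit_iff_coprime]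
      refine fun hcop => hy ?_
      rw [← ZMod.natCast_zmod_val y, ZMod.isUnit_iff_coprime]
      exact Nat.Coprime.coprime_dvd_right hq (hcop.pow_right k)
    rw [MulChar.map_nonunit _ hy, MulChar.map_nonunit _ hcast]

lemma chineseRemainder_apply_eq_cast {q₁ q₂ : ℕ} (h : q₁.Coprime q₂) (x : ZMod (q₁ * q₂)) :
    ZMod.chineseRemainder h x = (ZMod.cast x, ZMod.cast x) := by
  ext <;> simp [ZMod.chineseRemainder]

lemma changeLevel_mul_apply_of_coprime {R : Type*} [CommMonoidWithZero R] {q₁ q₂ : ℕ}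
    (h : q₁.Coprime q₂) (χ : DirichletCharacter R q₁)
    (x : ZMod (q₁ * q₂)) :
    changeLevel (dvd_mul_right q₁ q₂) χ x =
      χ (ZMod.cast x) * (1 : DirichletCharacter R q₂) (ZMod.cast x) := by
  have hunit : IsUnit x ↔ IsUnit (ZMod.cast x : ZMod q₁) ∧ IsUnit (ZMod.cast x : ZMod q₂) := by
    rw [← isUnit_map_iff (ZMod.chineseRemainder h) x, chineseRemainder_apply_eq_cast,
      Prod.isUnit_iff]
  by_cases hx : IsUnit x
  · rw [MulChar.one_apply (hunit.1 hx).2, mul_one]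
    simpa using changeLevel_eq_cast_of_dvd χ (dvd_mul_right q₁ q₂) hx.unit
  · rw [MulChar.map_nonunit _ hx]
    by_cases hx₁ : IsUnit (ZMod.cast x : ZMod q₁)
    · rw [MulChar.map_nonunit _ fun hx₂ => hx (hunit.2 ⟨hx₁, hx₂⟩), mul_zero]
    · rw [MulChar.map_nonunit _ hx₁, zero_mul]

lemma sum_cast_mul_eq_nsmul_sum {r t : ℕ} [NeZero r] [NeZero t] {M : Type*} [AddCommMonoid M]
    (g : ZMod r → M) : ∑ y : ZMod (r * t), g (ZMod.cast y) = t • ∑ u : ZMod r, g u := by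
  classical
  have hrt : r ∣ r * t := dvd_mul_right r t
  set π := ZMod.castHom hrt (ZMod r)
  have hfiber : ∀ u : ZMod r, #{y | π y = u} = #{y | π y = 0} := fun u =>
    AddMonoidHom.card_fiber_eq_of_mem_range π.toAddMonoidHom (ZMod.castHom_surjective hrt u)
      (ZMod.castHom_surjective hrt 0)
  have hcard : #{y | π y = 0} = t := by
    have hsum := Finset.card_eq_sum_card_fiberwise (f := π) (s := univ) (t := univ) (by simp)
    simp only [card_univ, ZMod.card, hfiber, sum_const, smul_eq_mul] at hsum
    exact Nat.eq_of_mul_eq_mul_left (Nat.pos_of_neZero r) hsum.symm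
  change ∑ y, g (π y) = _
  simp only [← Finset.sum_fiberwise' univ π g, sum_const, hfiber, hcard, smul_sum]

theorem gaussS_changeLevel_of_dvd_pow {r t k : ℕ} [NeZero r] [NeZero t] (h : r * t ∣ r ^ k)
    (χ : DirichletCharacter ℂ r) (n : ℤ) :
    gaussS (r * t) (changeLevel (dvd_mul_right r t) χ) n =
      if (t : ℤ) ∣ n then t * gaussS r χ (n / t : ℤ) else 0 := by
  have hrt : r ∣ r * t := dvd_mul_right r t
  have hχ := changeLevel_apply_of_dvd_pow hrt h χ
  rw [gaussS_eq_gaussSum, gaussS_eq_gaussSum]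
  split_ifs with hn
  · obtain ⟨n', rfl⟩ := hn
    rw [Int.mul_ediv_cancel_left _ (Int.natCast_ne_zero.2 (NeZero.ne t)), gaussSum, gaussSum]
    conv_rhs => rw [← nsmul_eq_mul, ← sum_cast_mul_eq_nsmul_sum]
    refine sum_congr rfl fun y _ => ?_
    rw [hχ, mulShift_apply, mulShift_apply, Int.cast_mul, Int.cast_natCast, mul_assoc,
      stdAddChar_natCast_mul, ZMod.cast_mul hrt, ZMod.cast_intCast hrt]
  · set ψ := ZMod.stdAddChar (N := r * t)
    have hshift : ψ (n * r) * gaussSum (changeLevel hrt χ) (ψ.mulShift n) =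
        gaussSum (changeLevel hrt χ) (ψ.mulShift n) := by
      rw [gaussSum, mul_sum]
      refine Fintype.sum_equiv (Equiv.addRight (r : ZMod (r * t))) _ _ fun y => ?_
      rw [Equiv.coe_addRight, hχ, hχ, mulShift_apply, mulShift_apply, ZMod.cast_add hrt,
        ZMod.cast_natCast hrt, ZMod.natCast_self, add_zero, mul_add, map_add_eq_mul]
      ring
    have hne : ψ (n * r) ≠ 1 := mt (stdAddChar_intCast_mul_natCast_eq_one_iff n).1 hn
    by_contra hG
    exact hne ((mul_eq_right₀ hG).1 hshift)

theorem gaussS_changeLevel_mul_of_coprime {q₁ q₂ : ℕ} [NeZero q₁] [NeZero q₂]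
    (h : q₁.Coprime q₂) (χ : DirichletCharacter ℂ q₁) (n : ℤ) :
    gaussS (q₁ * q₂) (changeLevel (dvd_mul_right q₁ q₂) χ) n =
      χ q₂ * ramanujanS q₂ n * gaussS q₁ χ n := by
  obtain ⟨d, c, hdc⟩ := Nat.isCoprime_iff_coprime.2 h
  have hbez : c * q₂ + d * q₁ = 1 := by rw [← hdc]; ring
  have hc : (c : ZMod q₁) * q₂ = 1 := by
    simpa using congrArg (Int.cast : ℤ → ZMod q₁) hbez
  have hd : (d : ZMod q₂) * q₁ = 1 := by
    simpa using congrArg (Int.cast : ℤ → ZMod q₂) hbez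
  have hsplit : gaussSum (changeLevel (dvd_mul_right q₁ q₂) χ) (ZMod.stdAddChar.mulShift n) =
      gaussSum χ ((ZMod.stdAddChar.mulShift n).mulShift c) *
        gaussSum (1 : DirichletCharacter ℂ q₂) ((ZMod.stdAddChar.mulShift n).mulShift d) := by
    rw [gaussSum, gaussSum, gaussSum, sum_mul_sum, ← Fintype.sum_prod_type']
    refine Fintype.sum_equiv (ZMod.chineseRemainder h).toEquiv _ _ fun x => ?_
    simp only [RingEquiv.toEquiv_eq_coe, EquivLike.coe_coe, chineseRemainder_apply_eq_cast,
      mulShift_apply,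
      changeLevel_mul_apply_of_coprime h, stdAddChar_eq_mul_of_coprime hbez,
      ZMod.cast_mul (dvd_mul_right q₁ q₂), ZMod.cast_mul (dvd_mul_left q₂ q₁),
      ZMod.cast_intCast (dvd_mul_right q₁ q₂), ZMod.cast_intCast (dvd_mul_left q₂ q₁)]
    ring_nf
  rw [gaussS_eq_gaussSum, gaussS_eq_gaussSum, ramanujanS_eq_gaussSum_one, hsplit,
    gaussSum_mulShift_of_mul_eq_one _ _ hc, gaussSum_mulShift_of_mul_eq_one _ _ hd,
    MulChar.one_apply (IsUnit.of_mul_eq_one_right _ hd), one_mul]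
  ring

lemma coprime_div_of_eq_gcd_pow {b r r₁ M : ℕ} (hb : 0 < b) (h₁ : r₁ = b.gcd (r ^ M))
    (h₂ : r₁ = b.gcd (r ^ (M + M))) : r₁.Coprime (b / r₁) := by
  have hb₁ : r₁ ∣ b := h₁ ▸ Nat.gcd_dvd_left _ _
  have hr₁ : r₁ ∣ r ^ M := h₁ ▸ Nat.gcd_dvd_right _ _
  have hpos : 0 < r₁ := h₁ ▸ Nat.gcd_pos_of_pos_left _ hb
  have hdvd : r₁ * r₁.gcd (b / r₁) ∣ r₁ * 1 := by
    rw [mul_one]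
    conv_rhs => rw [h₂]
    refine Nat.dvd_gcd (Nat.mul_dvd_of_dvd_div hb₁ (Nat.gcd_dvd_right _ _)) ?_
    rw [pow_add]
    exact mul_dvd_mul hr₁ ((Nat.gcd_dvd_left _ _).trans hr₁)
  exact Nat.dvd_one.1 (Nat.dvd_of_mul_dvd_mul_left hpos hdvd)

theorem gaussS_changeLevel_of_coprime_of_dvd_pow {r t b₂ k : ℕ} [NeZero r] [NeZero t]
    [NeZero b₂] (hrb : r ∣ r * t * b₂) (hcop : (r * t).Coprime b₂) (hpow : r * t ∣ r ^ k)
    (χ : DirichletCharacter ℂ r) (n : ℤ) :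
    gaussS (r * t * b₂) (changeLevel hrb χ) n =
      if (t : ℤ) ∣ n then χ b₂ * ramanujanS b₂ n * t * gaussS r χ (n / t : ℤ) else 0 := by
  rw [changeLevel_trans χ (dvd_mul_right r t) (dvd_mul_right _ b₂),
    gaussS_changeLevel_mul_of_coprime hcop, gaussS_changeLevel_of_dvd_pow hpow,
    changeLevel_apply_of_dvd_pow _ hpow, ZMod.cast_natCast (dvd_mul_right r t)]
  split_ifs
  · ring
  · rw [mul_zero]

/-- Let `r ∣ b` be positive integers and let `r1 = (b, r^∞)` be the largest
divisor of `b` all of whose prime factors divide `r` (characterized by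
`r1 = gcd(b, r^n)` for all sufficiently large `n`). Let `χ1` be the character mod `b`
induced by `χ` mod `r`. Then `G_{χ1}(m²) = χ(b/r1) R(m², b/r1) (r1/r) G_χ(m²r/r1)`
if `r1 ∣ m²r`, and `G_{χ1}(m²) = 0` otherwise. -/
theorem stmt5 (r b : ℕ) (hr : 0 < r) (hb : 0 < b) (hrb : r ∣ b)
    (r1 : ℕ) (hr1 : ∃ M : ℕ, ∀ n : ℕ, M ≤ n → r1 = Nat.gcd b (r ^ n))
    (χ : DirichletCharacter ℂ r) (m : ℤ) :
    if (r1 : ℤ) ∣ m ^ 2 * (r : ℤ) then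
      gaussS b (DirichletCharacter.changeLevel hrb χ) ((m ^ 2 : ℤ) : ZMod b) =
        χ (((b / r1 : ℕ)) : ZMod r) * ramanujanS (b / r1) ((m ^ 2 : ℤ) : ZMod (b / r1)) *
          (((r1 / r : ℕ)) : ℂ) * gaussS r χ ((m ^ 2 * (r : ℤ) / (r1 : ℤ) : ℤ) : ZMod r)
    else gaussS b (DirichletCharacter.changeLevel hrb χ) ((m ^ 2 : ℤ) : ZMod b) = 0 := by
  obtain ⟨M, hM⟩ := hr1
  have hr1M : r1 = b.gcd (r ^ M) := hM M le_rfl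
  have hcop : r1.Coprime (b / r1) := coprime_div_of_eq_gcd_pow hb hr1M (hM (M + M) (by omega))
  have hr1pow : r1 ∣ r ^ M := hr1M ▸ Nat.gcd_dvd_right _ _
  have hrr1 : r ∣ r1 := hM (M + 1) (by omega) ▸ Nat.dvd_gcd hrb (dvd_pow_self r (by omega))
  obtain ⟨b₂, rfl⟩ : r1 ∣ b := hr1M ▸ Nat.gcd_dvd_left _ _
  obtain ⟨t, rfl⟩ := hrr1
  have : NeZero r := ⟨hr.ne'⟩
  have : NeZero t := ⟨right_ne_zero_of_mul (left_ne_zero_of_mul hb.ne')⟩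
  have : NeZero b₂ := ⟨right_ne_zero_of_mul hb.ne'⟩
  have hr₀ : (r : ℤ) ≠ 0 := Int.natCast_ne_zero.2 hr.ne'
  rw [Nat.mul_div_cancel_left _ (Nat.pos_of_neZero _)] at hcop ⊢
  simp only [Nat.mul_div_cancel_left _ hr, Nat.cast_mul, mul_comm (m ^ 2) (r : ℤ),
    mul_dvd_mul_iff_left hr₀, Int.mul_ediv_mul_of_pos _ _ (Int.natCast_pos.2 hr),
    gaussS_changeLevel_of_coprime_of_dvd_pow hrb hcop hr1pow]
  split_ifs <;> rfl
end

section
/- Define ψ(n1, n2, r) := Σ_{u mod r, gcd(u,r)=1} R(u + n1, r) · R(u + n2, r). Then for every prime p, every integer α ≥ 2, and all integers n1, n2: ψ(n1, n2, p^α) = 0 if p | n1·n2, and ψ(n1, n2, p^α) = p^α · R(n1 − n2, p^α) if p ∤ n1·n2. -/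
/-- `ψ(n1, n2, r) = Σ_{u mod r, (u,r)=1} R(u + n1, r) R(u + n2, r)`. -/
noncomputable def psiSum (n1 n2 : ℤ) (r : ℕ) : ℂ :=
  ∑ u ∈ (Finset.range r).filter (fun u => Nat.gcd u r = 1),
    ramanujanS r (((u : ℕ) : ZMod r) + (n1 : ZMod r)) *
      ramanujanS r (((u : ℕ) : ZMod r) + (n2 : ZMod r))

open Finset ZMod

lemma eZMod_eq_stdAddChar_s12 {N : ℕ} [NeZero N] (x : ZMod N) : eZMod N x = stdAddChar x := by
  rw [eZMod, stdAddChar_apply, toCircle_apply]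

lemma sum_range_coprime_eq_sum_isUnit {β : Type*} [AddCommMonoid β] {N : ℕ} [NeZero N]
    (f : ZMod N → β) :
    ∑ a ∈ (range N).filter (fun a => Nat.gcd a N = 1), f a = ∑ x with IsUnit x, f x := by
  refine sum_nbij' (fun a => (a : ZMod N)) (fun x => x.val) ?_ ?_ ?_ ?_ ?_
  · intro a ha
    simp only [mem_filter, mem_range, mem_univ, true_and] at ha ⊢
    exact (isUnit_iff_coprime a N).mpr ha.2
  · intro x hx
    simp only [mem_filter, mem_range, mem_univ, true_and] at hx ⊢
    exact ⟨val_lt x, (isUnit_iff_coprime _ _).mp (by rwa [natCast_zmod_val])⟩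
  · intro a ha
    exact val_cast_of_lt (mem_range.mp (mem_filter.mp ha).1)
  · intro x _
    exact natCast_zmod_val x
  · intro a _
    rfl

lemma ramanujanS_eq_sum_isUnit {N : ℕ} [NeZero N] (n : ZMod N) :
    ramanujanS N n = ∑ a with IsUnit a, stdAddChar (a * n) := by
  simp only [ramanujanS, eZMod_eq_stdAddChar_s12]
  exact sum_range_coprime_eq_sum_isUnit (fun a => stdAddChar (a * n))

lemma geom_sum_of_pow_eq_one {K : Type*} [Field K] [DecidableEq K] {z : K} {m : ℕ}
    (h : z ^ m = 1) : ∑ i ∈ range m, z ^ i = if z = 1 then (m : K) else 0 := by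
  split_ifs with hz
  · simp [hz]
  · rw [geom_sum_eq hz, h, sub_self, zero_div]

lemma stdAddChar_eq_one_iff {N : ℕ} [NeZero N] {x : ZMod N} : stdAddChar x = 1 ↔ x = 0 := by
  rw [← (stdAddChar (N := N)).map_zero_eq_one, injective_stdAddChar.eq_iff]

/- The `m`-torsion of `ZMod (d * m)` is `{d * t | t < m}`, so the sum is geometric in
`e(d c)`, whose `m`-th power is `1`. -/
lemma sum_stdAddChar_of_nsmul_eq_zero {N d m : ℕ} [NeZero N] (hN : d * m = N) (c : ZMod N) :
    ∑ x with m • x = 0, stdAddChar (x * c) = if d • c = 0 then (m : ℂ) else 0 := by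
  subst hN
  have hd : 0 < d := Nat.pos_of_mul_pos_right (NeZero.pos (d * m))
  have hm : 0 < m := Nat.pos_of_mul_pos_left (NeZero.pos (d * m))
  have hdvd {x : ZMod (d * m)} (hx : m • x = 0) : d ∣ x.val := by
    rw [← natCast_zmod_val x, nsmul_eq_mul, ← Nat.cast_mul, natCast_eq_zero_iff] at hx
    exact (Nat.mul_dvd_mul_iff_right hm).mp (hx.trans (mul_comm m _).dvd)
  have hpow : stdAddChar (d • c) ^ m = 1 := by
    rw [← AddChar.map_nsmul_eq_pow, smul_smul, mul_comm m d, nsmul_eq_mul, natCast_self,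
      zero_mul, AddChar.map_zero_eq_one]
  trans ∑ t ∈ range m, stdAddChar (d • c) ^ t
  · refine sum_nbij' (fun x => x.val / d) (fun t => ((d * t : ℕ) : ZMod (d * m)))
      ?_ ?_ ?_ ?_ ?_
    · intro x _
      simp only [mem_range]
      exact Nat.div_lt_of_lt_mul (val_lt x)
    · intro t _
      simp only [mem_filter, mem_univ, true_and]
      rw [nsmul_eq_mul, ← Nat.cast_mul, natCast_eq_zero_iff]
      exact ⟨t, by ring⟩
    · intro x hx
      simp only [mem_filter, mem_univ, true_and] at hx
      simp only [Nat.mul_div_cancel' (hdvd hx), natCast_zmod_val]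
    · intro t ht
      simp only [mem_range] at ht
      simp only [val_cast_of_lt (Nat.mul_lt_mul_of_pos_left ht hd), Nat.mul_div_cancel_left t hd]
    · intro x hx
      simp only [mem_filter, mem_univ, true_and] at hx
      rw [← AddChar.map_nsmul_eq_pow, smul_smul, Nat.div_mul_cancel (hdvd hx), nsmul_eq_mul,
        natCast_zmod_val]
  · rw [geom_sum_of_pow_eq_one hpow]
    simp only [stdAddChar_eq_one_iff]

lemma sum_isUnit_ramanujanS_mul_ramanujanS {N : ℕ} [NeZero N] (c₁ c₂ : ZMod N) :
    ∑ u with IsUnit u, ramanujanS N (u + c₁) * ramanujanS N (u + c₂) =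
      ∑ a with IsUnit a, ∑ b with IsUnit b,
        stdAddChar (a * c₁ + b * c₂) * ramanujanS N (a + b) := by
  simp only [ramanujanS_eq_sum_isUnit, sum_mul_sum]
  simp only [mul_sum]
  rw [sum_comm]
  refine sum_congr rfl fun a _ => ?_
  rw [sum_comm]
  refine sum_congr rfl fun b _ => sum_congr rfl fun u _ => ?_
  rw [← AddChar.map_add_eq_mul, ← AddChar.map_add_eq_mul]
  ring_nf

lemma pow_nsmul_eq_zero_of_nsmul_eq_zero {M : Type*} [AddMonoid M] {x : M} {p j : ℕ}
    (hj : j ≠ 0) (h : p • x = 0) : p ^ j • x = 0 :=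
  addOrderOf_dvd_iff_nsmul_eq_zero.mp
    ((addOrderOf_dvd_iff_nsmul_eq_zero.mpr h).trans (dvd_pow_self p hj))

section PrimePow

variable {p : ℕ} [hp : Fact p.Prime] {k : ℕ}

lemma pow_pred_nsmul_natCast_eq_zero_iff (hk : 0 < k) (v : ℕ) :
    p ^ (k - 1) • (v : ZMod (p ^ k)) = 0 ↔ p ∣ v := by
  rw [nsmul_eq_mul, ← Nat.cast_mul, natCast_eq_zero_iff, ← Nat.sub_one_add_one hk.ne', pow_succ,
    Nat.add_sub_cancel, Nat.mul_dvd_mul_iff_left (pow_pos hp.out.pos _)]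

lemma pow_pred_nsmul_intCast_eq_zero_iff (hk : 0 < k) (n : ℤ) :
    p ^ (k - 1) • (n : ZMod (p ^ k)) = 0 ↔ (p : ℤ) ∣ n := by
  rw [nsmul_eq_mul, ← Int.cast_natCast, ← Int.cast_mul, intCast_zmod_eq_zero_iff_dvd,
    ← Nat.sub_one_add_one hk.ne', pow_succ, Nat.add_sub_cancel, Nat.cast_mul, Nat.cast_pow,
    Int.mul_dvd_mul_iff_left (pow_ne_zero _ (Int.natCast_ne_zero.mpr hp.out.ne_zero))]

lemma not_isUnit_iff_pow_pred_nsmul_eq_zero (hk : 0 < k) (x : ZMod (p ^ k)) :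
    ¬IsUnit x ↔ p ^ (k - 1) • x = 0 := by
  rw [← natCast_zmod_val x, isUnit_natCast_iff_not_dvd_pow hp.out hk, not_not,
    pow_pred_nsmul_natCast_eq_zero_iff hk]

lemma isUnit_add_iff_of_nsmul_eq_zero (hk : 2 ≤ k) {y : ZMod (p ^ k)} (hy : p • y = 0)
    (x : ZMod (p ^ k)) : IsUnit (x + y) ↔ IsUnit x := by
  rw [← not_iff_not, not_isUnit_iff_pow_pred_nsmul_eq_zero (by omega),
    not_isUnit_iff_pow_pred_nsmul_eq_zero (by omega), smul_add,
    pow_nsmul_eq_zero_of_nsmul_eq_zero (by omega) hy, add_zero]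

lemma ramanujanS_prime_pow (hk : 0 < k) (c : ZMod (p ^ k)) :
    ramanujanS (p ^ k) c =
      (if c = 0 then (p : ℂ) ^ k else 0) - if p • c = 0 then (p : ℂ) ^ (k - 1) else 0 := by
  have hfull : ∑ x, stdAddChar (x * c) = if c = 0 then (p : ℂ) ^ k else 0 := by
    rw [AddChar.sum_mulShift c (isPrimitive_stdAddChar _), ZMod.card]
    push_cast
    rfl
  have hnonunits :
      ∑ x with ¬IsUnit x, stdAddChar (x * c) = if p • c = 0 then (p : ℂ) ^ (k - 1) else 0 := by
    rw [filter_congr fun x _ => not_isUnit_iff_pow_pred_nsmul_eq_zero hk x,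
      sum_stdAddChar_of_nsmul_eq_zero (by rw [← pow_succ', Nat.sub_one_add_one hk.ne'])]
    push_cast
    rfl
  rw [ramanujanS_eq_sum_isUnit, ← hfull, ← hnonunits,
    ← sum_filter_add_sum_filter_not univ IsUnit, add_sub_cancel_right]

lemma ramanujanS_prime_pow_of_isUnit (hk : 2 ≤ k) {c : ZMod (p ^ k)} (hc : IsUnit c) :
    ramanujanS (p ^ k) c = 0 := by
  have : Fact (1 < p ^ k) := ⟨Nat.one_lt_pow (by omega) hp.out.one_lt⟩
  have hpc : p • c ≠ 0 := fun h => (not_isUnit_iff_pow_pred_nsmul_eq_zero (by omega) c).mpr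
    (pow_nsmul_eq_zero_of_nsmul_eq_zero (by omega) h) hc
  rw [ramanujanS_prime_pow (by omega), if_neg hc.ne_zero, if_neg hpc, sub_zero]

lemma sum_isUnit_stdAddChar_of_nsmul_add_eq_zero (hk : 2 ≤ k) {a : ZMod (p ^ k)} (ha : IsUnit a)
    (c : ZMod (p ^ k)) :
    ∑ b with IsUnit b ∧ p • (a + b) = 0, stdAddChar (b * c) =
      stdAddChar (-a * c) * if p ^ (k - 1) • c = 0 then (p : ℂ) else 0 := by
  rw [← sum_stdAddChar_of_nsmul_eq_zero (by rw [← pow_succ, Nat.sub_one_add_one (by omega)]),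
    mul_sum]
  refine sum_nbij' (fun b => a + b) (fun y => y - a) ?_ ?_ ?_ ?_ ?_
  · intro b hb
    simp only [mem_filter, mem_univ, true_and] at hb ⊢
    exact hb.2
  · intro y hy
    simp only [mem_filter, mem_univ, true_and] at hy ⊢
    rw [sub_eq_neg_add, isUnit_add_iff_of_nsmul_eq_zero hk hy, add_neg_cancel_left]
    exact ⟨ha.neg, hy⟩
  · intro b _
    exact add_sub_cancel_left a b
  · intro y _
    exact add_sub_cancel a y
  · intro b _
    rw [← AddChar.map_add_eq_mul]
    ring_nf

lemma sum_isUnit_ramanujanS_mul_ramanujanS_prime_pow (hk : 2 ≤ k) (c₁ c₂ : ZMod (p ^ k)) :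
    ∑ u with IsUnit u, ramanujanS (p ^ k) (u + c₁) * ramanujanS (p ^ k) (u + c₂) =
      if p ^ (k - 1) • c₂ = 0 then 0 else (p : ℂ) ^ k * ramanujanS (p ^ k) (c₁ - c₂) := by
  have hinner (a : ZMod (p ^ k)) (ha : a ∈ univ.filter IsUnit) :
      ∑ b with IsUnit b, stdAddChar (a * c₁ + b * c₂) * ramanujanS (p ^ k) (a + b) =
        (if p ^ (k - 1) • c₂ = 0 then 0 else (p : ℂ) ^ k) * stdAddChar (a * (c₁ - c₂)) := by
    obtain ⟨-, ha⟩ := mem_filter.mp ha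
    have hdiag : ∑ b with IsUnit b,
        (if a + b = 0 then stdAddChar (a * c₁ + b * c₂) * (p : ℂ) ^ k else 0) =
          (p : ℂ) ^ k * stdAddChar (a * (c₁ - c₂)) := by
      simp only [add_eq_zero_iff_eq_neg', sum_ite_eq', mem_filter, mem_univ, true_and, ha.neg,
        if_true]
      ring_nf
    have hfiber : ∑ b with IsUnit b,
        (if p • (a + b) = 0 then stdAddChar (a * c₁ + b * c₂) * (p : ℂ) ^ (k - 1) else 0) =
          (if p ^ (k - 1) • c₂ = 0 then (p : ℂ) ^ k else 0) * stdAddChar (a * (c₁ - c₂)) := by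
      rw [← sum_filter, filter_filter, ← sum_mul]
      simp only [AddChar.map_add_eq_mul, ← mul_sum]
      rw [sum_isUnit_stdAddChar_of_nsmul_add_eq_zero hk ha, ← mul_assoc,
        ← AddChar.map_add_eq_mul, ← pow_sub_one_mul (by omega : k ≠ 0) (p : ℂ)]
      split_ifs <;> ring_nf
    simp only [ramanujanS_prime_pow (by omega : 0 < k), mul_sub, sum_sub_distrib, mul_ite,
      mul_zero, hdiag, hfiber]
    split_ifs <;> ring
  rw [sum_isUnit_ramanujanS_mul_ramanujanS, sum_congr rfl hinner, ← mul_sum,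
    ← ramanujanS_eq_sum_isUnit]
  split_ifs <;> ring

lemma psiSum_prime_pow (hk : 2 ≤ k) (n₁ n₂ : ℤ) :
    psiSum n₁ n₂ (p ^ k) =
      if (p : ℤ) ∣ n₂ then 0
      else (p : ℂ) ^ k * ramanujanS (p ^ k) ((n₁ - n₂ : ℤ) : ZMod (p ^ k)) := by
  rw [psiSum, sum_range_coprime_eq_sum_isUnit
      (fun x : ZMod (p ^ k) => ramanujanS (p ^ k) (x + n₁) * ramanujanS (p ^ k) (x + n₂)),
    sum_isUnit_ramanujanS_mul_ramanujanS_prime_pow hk, Int.cast_sub]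
  simp only [pow_pred_nsmul_intCast_eq_zero_iff (by omega : 0 < k)]

end PrimePow

/-- For a prime `p`, `α ≥ 2` and integers `n1, n2`:
`ψ(n1, n2, p^α) = 0` if `p ∣ n1·n2`, and `ψ(n1, n2, p^α) = p^α·R(n1 − n2, p^α)` otherwise. -/
theorem stmt12 (p : ℕ) (hp : p.Prime) (α : ℕ) (hα : 2 ≤ α) (n1 n2 : ℤ) :
    psiSum n1 n2 (p ^ α) =
      if (p : ℤ) ∣ n1 * n2 then 0
      else ((p : ℂ) ^ α) * ramanujanS (p ^ α) ((n1 - n2 : ℤ) : ZMod (p ^ α)) := by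
  have : Fact p.Prime := ⟨hp⟩
  rw [psiSum_prime_pow hα]
  by_cases h₂ : (p : ℤ) ∣ n2
  · rw [if_pos h₂, if_pos (h₂.mul_left n1)]
  rw [if_neg h₂]
  by_cases h₁ : (p : ℤ) ∣ n1
  · have hunit : IsUnit ((n1 - n2 : ℤ) : ZMod (p ^ α)) := by
      rw [← not_not (a := IsUnit _), not_isUnit_iff_pow_pred_nsmul_eq_zero (by omega),
        pow_pred_nsmul_intCast_eq_zero_iff (by omega)]
      exact fun h => h₂ (by simpa using dvd_sub h₁ h)
    rw [if_pos (h₁.mul_right n2), ramanujanS_prime_pow_of_isUnit hα hunit, mul_zero]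
  · rw [if_neg ((Nat.prime_iff_prime_int.mp hp).dvd_mul.not.mpr (not_or.mpr ⟨h₁, h₂⟩))]
end
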